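/- Let $B$ be the generic $(r+1)\times(r+1)$ matrix of independent indeterminates with $r \geq 2$. Then $B^t$ is not equivalent to $B$: there do not exist $S, T \in GL(r+1,\mathbb{C})$ with $B^t = S B T$ as matrices of linear forms. -/

import Mathlib

open Matrix

namespace Matrix

variable {m n p q R : Type*} [Fintype n] [Fintype p] [DecidableEq n] [DecidableEq p]

theorem mul_single_mul_apply [NonUnitalNonAssocSemiring R] (S : Matrix m n R)
    (T : Matrix p q R) (i : n) (j : p) (c : R) (k : m) (l : q) :
    (S * single i j c * T) k l = S k i * c * T j l := by
  simp [mul_apply, single_apply, ite_and]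

/-- Testing `Xᵀ = S * X * T` on the matrix units forces `S k i * T j l = δ_il δ_jk`. For `a ≠ b`
this makes `S a a` a unit, hence `T a b = 0`, contradicting `S b a * T a b = 1`. -/
theorem transpose_ne_mul_mul [Nontrivial n] [Semiring R] [IsDedekindFiniteMonoid R] [Nontrivial R]
    (S T : Matrix n n R) : ¬ ∀ X : Matrix n n R, Xᵀ = S * X * T := by
  intro h
  have entry (i j k l : n) : S k i * T j l = if i = l ∧ j = k then 1 else 0 := by
    simpa [mul_single_mul_apply, single_apply] using
      (congrFun (congrFun (h (single i j 1)) k) l).symm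
  obtain ⟨a, b, hab⟩ := exists_pair_ne n
  have hSaa : IsUnit (S a a) := IsUnit.of_mul_eq_one _ (by simpa using entry a a a a)
  have hTab : T a b = 0 := hSaa.mul_right_eq_zero.mp (by simpa [hab] using entry a a a b)
  simpa [hTab] using entry b a a b

end Matrix

/-- The transpose of the generic `(r+1) × (r+1)` matrix of independent linear forms
(`r ≥ 2`) is not equivalent to it: there are no invertible constant matrices `S, T`
with `Xᵀ = S X T` for all `X`. -/
theorem generic_matrix_transpose_not_equivalent
    (r : ℕ) (hr : 2 ≤ r) :
    ¬ ∃ S T : Matrix (Fin (r + 1)) (Fin (r + 1)) ℂ, IsUnit S ∧ IsUnit T ∧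
      ∀ X : Matrix (Fin (r + 1)) (Fin (r + 1)) ℂ, Xᵀ = S * X * T := by
  rintro ⟨S, T, -, -, h⟩
  have : Nontrivial (Fin (r + 1)) := Fin.nontrivial_iff_two_le.mpr (by omega)
  exact transpose_ne_mul_mul S T h
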